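/- arXiv:1202.1976 — 2 statements merged into one kernel-verified Lean document; each statement's English description precedes it below -/
import Mathlib

section
/- For every nonnegative integer n, real u, and α > 0: ∫_{-∞}^{∞} L_n(x,u) exp(-α x²) dx = √(π/α) · Q_n^{(0)}(u, 1/(4α)), where L_n(x,y) = n! ∑_{k=0}^{n} (-1)^k x^k y^(n-k) / ((n-k)! (k!)²) is the two-variable Laguerre polynomial and Q_n^{(ν)}(x,y) = n! ∑_{k=0}^{⌊n/2⌋} x^(n-2k) y^k / ((n-2k)! k! Γ(2k+ν+1)). -/
open Real MeasureTheory Finset Nat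

/-!
Expand `L_n(x, u)` in powers of `x` and integrate term by term against the Gaussian. The odd
moments vanish by symmetry, and the even ones come from `Γ(m + 1/2)`:
`∫ x ^ (2m) e^{-αx²} = √(π/α) (2m)! / (m! (4α)^m)`. As `Γ(2m + 1) = (2m)!`, the `k = 2m` term of
`L_n` then integrates to `√(π/α)` times the `m`-th term of `Q_n^{(0)}(u, 1/(4α))`.
-/

/-- Two-variable Laguerre polynomial `L_n(x,y)`. -/
noncomputable def L2v (n : ℕ) (x y : ℝ) : ℝ :=
  (n ! : ℝ) * ∑ k ∈ Finset.range (n + 1),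
    (-1 : ℝ) ^ k * x ^ k * y ^ (n - k) / (((n - k)! : ℝ) * ((k ! : ℝ)) ^ 2)

/-- The polynomials `Q_n^{(ν)}(x,y)`. -/
noncomputable def Qpoly (ν : ℝ) (n : ℕ) (x y : ℝ) : ℝ :=
  (n ! : ℝ) * ∑ k ∈ Finset.range (n / 2 + 1),
    x ^ (n - 2 * k) * y ^ k /
      (((n - 2 * k)! : ℝ) * (k ! : ℝ) * Real.Gamma (2 * k + ν + 1))

theorem Finset.sum_range_succ_eq_sum_range_half_of_odd {M : Type*} [AddCommMonoid M]
    (n : ℕ) (f : ℕ → M) (hf : ∀ k, Odd k → f k = 0) :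
    ∑ k ∈ range (n + 1), f k = ∑ m ∈ range (n / 2 + 1), f (2 * m) := by
  have h_even : (range (n + 1)).filter Even = (range (n / 2 + 1)).image (2 * ·) := by
    ext k
    simp only [mem_filter, mem_range, mem_image, Nat.even_iff]
    constructor
    · rintro ⟨hk, hk_even⟩
      exact ⟨k / 2, by omega, by omega⟩
    · rintro ⟨m, hm, rfl⟩
      omega
  rw [← sum_filter_add_sum_filter_not _ Even, h_even,
    sum_image fun _ _ _ _ h => by simpa using h,
    sum_eq_zero fun k hk => hf k (Nat.not_even_iff_odd.mp (mem_filter.mp hk).2), add_zero]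

theorem Real.Gamma_nat_add_half_eq_factorial (m : ℕ) :
    Gamma (m + 1 / 2) = √π * (2 * m)! / (4 ^ m * m !) := by
  induction m with
  | zero => simpa using Gamma_one_half_eq
  | succ m ih =>
    rw [show ((m + 1 : ℕ) : ℝ) + 1 / 2 = (m + 1 / 2) + 1 by push_cast; ring,
      Gamma_add_one (by positivity), ih, show 2 * (m + 1) = (2 * m + 1) + 1 by ring,
      factorial_succ, factorial_succ, factorial_succ]
    push_cast
    field_simp
    ring

section GaussianMoments

variable {b : ℝ}

theorem integrable_pow_mul_exp_neg_mul_sq (hb : 0 < b) (k : ℕ) :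
    Integrable fun x : ℝ => x ^ k * exp (-b * x ^ 2) := by
  simpa [rpow_natCast] using
    integrable_rpow_mul_exp_neg_mul_sq hb (s := k) (by linarith [k.cast_nonneg (α := ℝ)])

theorem integral_pow_mul_exp_neg_mul_sq_of_odd {k : ℕ} (hk : Odd k) :
    ∫ x : ℝ, x ^ k * exp (-b * x ^ 2) = 0 := by
  have h := integral_neg_eq_self (fun x : ℝ => x ^ k * exp (-b * x ^ 2)) volume
  simp only [hk.neg_pow, neg_sq, neg_mul, integral_neg] at h ⊢
  linarith

theorem integral_pow_two_mul_mul_exp_neg_mul_sq (hb : 0 < b) (m : ℕ) :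
    ∫ x : ℝ, x ^ (2 * m) * exp (-b * x ^ 2) = √(π / b) * (2 * m)! / (m ! * (4 * b) ^ m) := by
  have h_half : ∫ x : ℝ, x ^ (2 * m) * exp (-b * x ^ 2)
      = 2 * ∫ x in Set.Ioi 0, x ^ ((2 * m : ℕ) : ℝ) * exp (-b * x ^ (2 : ℝ)) := by
    simp only [rpow_natCast, rpow_two]
    rw [← integral_comp_abs (f := fun x => x ^ (2 * m) * exp (-b * x ^ 2))]
    simp only [pow_mul, sq_abs]
  have h_exp : b ^ (-(((2 * m : ℕ) : ℝ) + 1) / 2) = (b ^ m)⁻¹ * (√b)⁻¹ := by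
    rw [show -(((2 * m : ℕ) : ℝ) + 1) / 2 = -(m : ℝ) + -(1 / 2) by push_cast; ring,
      rpow_add hb, rpow_neg hb.le, rpow_neg hb.le, rpow_natCast, sqrt_eq_rpow]
  have h_gt : (-1 : ℝ) < ((2 * m : ℕ) : ℝ) := by
    linarith [(2 * m : ℕ).cast_nonneg (α := ℝ)]
  rw [h_half, integral_rpow_mul_exp_neg_mul_rpow two_pos h_gt hb, h_exp,
    show (((2 * m : ℕ) : ℝ) + 1) / 2 = m + 1 / 2 by push_cast; ring,
    Gamma_nat_add_half_eq_factorial, sqrt_div pi_pos.le, mul_pow]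
  have : 0 < √b := sqrt_pos.mpr hb
  field_simp

theorem integral_sum_mul_pow_mul_exp_neg_mul_sq (hb : 0 < b) (n : ℕ) (c : ℕ → ℝ) :
    ∫ x : ℝ, (∑ k ∈ range (n + 1), c k * x ^ k) * exp (-b * x ^ 2) =
      √(π / b) * ∑ m ∈ range (n / 2 + 1), c (2 * m) * (2 * m)! / (m ! * (4 * b) ^ m) := by
  simp_rw [sum_mul, mul_assoc]
  rw [integral_finsetSum _ fun k _ => (integrable_pow_mul_exp_neg_mul_sq hb k).const_mul _]
  simp_rw [integral_const_mul]
  rw [sum_range_succ_eq_sum_range_half_of_odd n _ fun k hk => by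
      rw [integral_pow_mul_exp_neg_mul_sq_of_odd hk, mul_zero], mul_sum]
  refine sum_congr rfl fun m _ => ?_
  rw [integral_pow_two_mul_mul_exp_neg_mul_sq hb]
  ring

end GaussianMoments

theorem laguerre_gaussian_integral (n : ℕ) (u α : ℝ) (hα : 0 < α) :
    ∫ x : ℝ, L2v n x u * Real.exp (-α * x ^ 2) =
      Real.sqrt (π / α) * Qpoly 0 n u (1 / (4 * α)) := by
  have h_poly : ∀ x : ℝ, L2v n x u = ∑ k ∈ range (n + 1),
      (n ! : ℝ) * ((-1) ^ k * u ^ (n - k) / ((n - k)! * (k ! : ℝ) ^ 2)) * x ^ k := fun x => by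
    rw [L2v, mul_sum]
    exact sum_congr rfl fun k _ => by ring
  simp_rw [h_poly]
  rw [integral_sum_mul_pow_mul_exp_neg_mul_sq hα, Qpoly]
  simp only [mul_sum]
  refine sum_congr rfl fun m _ => ?_
  rw [show (2 * m + 0 + 1 : ℝ) = ((2 * m : ℕ) : ℝ) + 1 by push_cast; ring,
    Gamma_nat_eq_factorial, pow_mul, neg_one_sq, one_pow, one_div, inv_pow]
  field_simp
end

section
/- For all nonnegative integers m, n, reals a, b, f, g, y, and α > 0: ∫_{-∞}^{∞} (a x + b)^m H_n(f x + g, y) exp(-α x²) dx = √(π/α) · H_{m,n}(b, a²/(4α); g, y + f²/(4α) | a f/(2α)). -/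
open Real MeasureTheory Finset Nat

/-- Two-variable Hermite polynomial `H_n(x,y)`. -/
noncomputable def H2v (n : ℕ) (x y : ℝ) : ℝ :=
  (n ! : ℝ) * ∑ k ∈ Finset.range (n / 2 + 1),
    x ^ (n - 2 * k) * y ^ k / (((n - 2 * k)! : ℝ) * (k ! : ℝ))

/-- Two-index Hermite polynomial `H_{m,n}(x,y;w,z|τ)`. -/
noncomputable def H2idx (m n : ℕ) (x y w z τ : ℝ) : ℝ :=
  (m ! : ℝ) * (n ! : ℝ) * ∑ k ∈ Finset.range (min m n + 1),
    τ ^ k * H2v (m - k) x y * H2v (n - k) w z /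
      (((m - k)! : ℝ) * ((n - k)! : ℝ) * (k ! : ℝ))

/-! Both sides satisfy the same three-term recurrences in `m` and in `n` and agree at
`m = n = 0`, where the left side is the Gaussian integral `√(π/α)`. On the integral side the
recurrences come from Gaussian integration by parts,
`∫ x φ e^{-αx²} = (2α)⁻¹ ∫ φ' e^{-αx²}`, together with `∂ₓ H_n = n H_{n-1}` and
`H_{n+1} = x H_n + 2 n y H_{n-1}`; on the side of `H_{m,n}` they come from the same recurrence
for `H_n` and Pascal's rule in the defining sum. -/

open Polynomial

lemma H2v_zero (x y : ℝ) : H2v 0 x y = 1 := by simp [H2v]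

/- The factor `n + 2 - 2k` kills the extra summand `k = n/2 + 1` (for even `n`), so that this
sum and the one in `mul_H2v_eq_sum` have a common range and add up termwise to `H2v (n + 2)`. -/
lemma mul_H2v_succ_eq_sum (n : ℕ) (x y : ℝ) :
    x * H2v (n + 1) x y = ((n + 1)! : ℝ) * ∑ k ∈ range (n / 2 + 2),
      ((n + 2 - 2 * k : ℕ) : ℝ) * x ^ (n + 2 - 2 * k) * y ^ k / ((n + 2 - 2 * k)! * k !) := by
  rw [H2v, mul_left_comm, mul_sum,
    ← sum_subset (range_subset_range.2 (by omega : (n + 1) / 2 + 1 ≤ n / 2 + 2))]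
  · refine congrArg _ (sum_congr rfl fun k hk => ?_)
    obtain ⟨j, hj, hj'⟩ : ∃ j, n + 1 - 2 * k = j ∧ n + 2 - 2 * k = j + 1 :=
      ⟨_, rfl, by simp only [mem_range] at hk; omega⟩
    rw [hj, hj', factorial_succ]
    push_cast
    field_simp
    ring
  · intro k hk hk'
    simp only [mem_range] at hk hk'
    simp [show n + 2 - 2 * k = 0 by omega]

lemma mul_H2v_eq_sum (n : ℕ) (x y : ℝ) :
    2 * (n + 1) * y * H2v n x y = ((n + 1)! : ℝ) * ∑ k ∈ range (n / 2 + 2),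
      ((2 * k : ℕ) : ℝ) * x ^ (n + 2 - 2 * k) * y ^ k / ((n + 2 - 2 * k)! * k !) := by
  rw [sum_range_succ', H2v, mul_left_comm, mul_sum, mul_sum]
  simp only [mul_zero, Nat.cast_zero, zero_mul, zero_div, add_zero]
  rw [mul_sum]
  refine sum_congr rfl fun k _ => ?_
  rw [show n + 2 - 2 * (k + 1) = n - 2 * k by omega, factorial_succ k, factorial_succ n]
  push_cast
  field_simp
  ring

lemma H2v_succ_succ (n : ℕ) (x y : ℝ) :
    H2v (n + 2) x y = x * H2v (n + 1) x y + 2 * (n + 1) * y * H2v n x y := by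
  rw [mul_H2v_succ_eq_sum, mul_H2v_eq_sum, ← mul_add, ← sum_add_distrib, H2v,
    show (n + 2) / 2 + 1 = n / 2 + 2 by omega, factorial_succ (n + 1), mul_sum, mul_sum]
  refine sum_congr rfl fun k hk => ?_
  have hk : 2 * k ≤ n + 2 := by simp only [mem_range] at hk; omega
  rw [← add_div, ← add_mul, ← add_mul, ← Nat.cast_add, Nat.sub_add_cancel hk]
  push_cast
  ring

lemma H2v_succ (n : ℕ) (x y : ℝ) :
    H2v (n + 1) x y = x * H2v n x y + 2 * n * y * H2v (n - 1) x y := by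
  cases n with
  | zero => simp [H2v]
  | succ n => simpa using H2v_succ_succ n x y

lemma hasDerivAt_H2v (n : ℕ) (y t : ℝ) :
    HasDerivAt (fun s => H2v n s y) (n * H2v (n - 1) t y) t := by
  induction n using Nat.twoStepInduction generalizing t with
  | zero => simpa [H2v_zero] using hasDerivAt_const t (1 : ℝ)
  | one => simpa [H2v_succ 0, H2v_zero] using hasDerivAt_id' t
  | more n ih₀ ih₁ =>
    simp_rw [H2v_succ_succ n _ y]
    refine (((hasDerivAt_id' t).mul (ih₁ t)).add
      ((ih₀ t).const_mul (2 * (n + 1) * y))).congr_deriv ?_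
    rw [show n + 2 - 1 = n + 1 from rfl, Nat.add_sub_cancel, H2v_succ n t y]
    push_cast
    ring

lemma exists_eval_eq_H2v (n : ℕ) (y : ℝ) : ∃ P : ℝ[X], ∀ t, P.eval t = H2v n t y :=
  ⟨C (n ! : ℝ) *
      ∑ k ∈ range (n / 2 + 1), X ^ (n - 2 * k) * C (y ^ k / ((n - 2 * k)! * k !)),
    fun t => by
      simp only [H2v, eval_mul, eval_C, eval_finsetSum, eval_pow, eval_X, mul_div_assoc]⟩

lemma H2idx_eq_sum (m n : ℕ) (x y w z τ : ℝ) {N : ℕ} (hN : min m n < N) :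
    H2idx m n x y w z τ = ∑ k ∈ range N,
      (m.choose k : ℝ) * H2v (m - k) x y *
        ((n.choose k : ℝ) * k ! * τ ^ k * H2v (n - k) w z) := by
  rw [H2idx, mul_sum, ← sum_subset (range_subset_range.2 (Nat.succ_le_of_lt hN))]
  · refine sum_congr rfl fun k hk => ?_
    have hk : k ≤ min m n := Nat.lt_succ_iff.1 (mem_range.1 hk)
    rw [Nat.cast_choose ℝ (hk.trans (min_le_left m n)),
      Nat.cast_choose ℝ (hk.trans (min_le_right m n))]
    field_simp
  · intro k _ hk
    obtain h | h : m < k ∨ n < k := by simp only [mem_range] at hk; omega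
    all_goals simp [Nat.choose_eq_zero_of_lt h]

lemma H2idx_comm (m n : ℕ) (x y w z τ : ℝ) : H2idx m n x y w z τ = H2idx n m w z x y τ := by
  rw [H2idx, H2idx, min_comm, mul_comm (m ! : ℝ)]
  exact congrArg _ (sum_congr rfl fun k _ => by ring)

lemma sum_range_succ_choose_succ_mul {R : Type*} [CommSemiring R] (m N : ℕ) (h u : ℕ → R) :
    ∑ k ∈ range (N + 1), ((m + 1).choose k : R) * h (m + 1 - k) * u k =
      ∑ k ∈ range (N + 1), (m.choose k : R) * h (m + 1 - k) * u k +
        ∑ k ∈ range N, (m.choose k : R) * h (m - k) * u (k + 1) := by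
  rw [sum_range_succ', sum_range_succ' (fun k => (m.choose k : R) * h (m + 1 - k) * u k),
    add_right_comm, ← sum_add_distrib]
  simp only [Nat.choose_succ_succ', Nat.cast_add, choose_zero_right, Nat.add_sub_add_right]
  congr 1
  exact sum_congr rfl fun k _ => by ring

lemma sub_mul_choose (m k : ℕ) : (m - k) * m.choose k = m * (m - 1).choose k := by
  cases m with
  | zero => simp
  | succ m => rw [Nat.add_sub_cancel, mul_comm, ← Nat.choose_mul_succ_eq, mul_comm]

lemma choose_succ_mul_factorial_succ (n k : ℕ) :
    n.choose (k + 1) * (k + 1)! = n * ((n - 1).choose k * k !) := by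
  cases n with
  | zero => simp
  | succ n =>
    rw [Nat.add_sub_cancel, factorial_succ, ← mul_assoc, ← Nat.add_one_mul_choose_eq]
    ring

lemma choose_mul_H2v_succ_sub (m k : ℕ) (x y : ℝ) :
    (m.choose k : ℝ) * H2v (m + 1 - k) x y =
      x * ((m.choose k : ℝ) * H2v (m - k) x y) +
        2 * m * y * (((m - 1).choose k : ℝ) * H2v (m - 1 - k) x y) := by
  rcases le_or_gt k m with hk | hk
  · have hc : ((m - k : ℕ) : ℝ) * m.choose k = m * (m - 1).choose k := by
      exact_mod_cast sub_mul_choose m k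
    rw [Nat.sub_add_comm hk, H2v_succ, Nat.sub_right_comm]
    linear_combination 2 * y * H2v (m - 1 - k) x y * hc
  · simp [Nat.choose_eq_zero_of_lt hk, Nat.choose_eq_zero_of_lt (show m - 1 < k by omega)]

lemma H2idx_succ_left (m n : ℕ) (x y w z τ : ℝ) :
    H2idx (m + 1) n x y w z τ =
      x * H2idx m n x y w z τ + 2 * m * y * H2idx (m - 1) n x y w z τ +
        n * τ * H2idx m (n - 1) x y w z τ := by
  rw [H2idx_eq_sum (m + 1) n x y w z τ (N := m + n + 2) (by omega),
    H2idx_eq_sum m n x y w z τ (N := m + n + 2) (by omega),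
    H2idx_eq_sum (m - 1) n x y w z τ (N := m + n + 2) (by omega),
    H2idx_eq_sum m (n - 1) x y w z τ (N := m + n + 1) (by omega),
    sum_range_succ_choose_succ_mul (h := fun j => H2v j x y), mul_sum, mul_sum, mul_sum,
    ← sum_add_distrib]
  congr 1
  · refine sum_congr rfl fun k _ => ?_
    rw [choose_mul_H2v_succ_sub]
    ring
  · refine sum_congr rfl fun k _ => ?_
    have hc : (n.choose (k + 1) : ℝ) * (k + 1)! = n * ((n - 1).choose k * k !) := by
      exact_mod_cast choose_succ_mul_factorial_succ n k
    rw [show n - (k + 1) = n - 1 - k by omega]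
    linear_combination
      (m.choose k : ℝ) * H2v (m - k) x y * τ ^ (k + 1) * H2v (n - 1 - k) w z * hc

lemma H2idx_succ_right (m n : ℕ) (x y w z τ : ℝ) :
    H2idx m (n + 1) x y w z τ =
      w * H2idx m n x y w z τ + 2 * n * z * H2idx m (n - 1) x y w z τ +
        m * τ * H2idx (m - 1) n x y w z τ := by
  simp only [H2idx_comm m, H2idx_comm (m - 1), H2idx_succ_left]

lemma integrable_eval_mul_exp_neg_mul_sq {α : ℝ} (hα : 0 < α) (P : ℝ[X]) :
    Integrable fun x : ℝ => P.eval x * exp (-α * x ^ 2) := by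
  induction P using Polynomial.induction_on' with
  | add p q hp hq => simpa [add_mul] using hp.fun_add hq
  | monomial j c =>
    have h := integrable_rpow_mul_exp_neg_mul_sq hα (s := j)
      (by linarith [j.cast_nonneg (α := ℝ)])
    simp_rw [rpow_natCast] at h
    simpa [mul_assoc] using h.const_mul c

lemma integral_id_mul_mul_exp_neg_mul_sq {α : ℝ} (hα : α ≠ 0) {u u' : ℝ → ℝ}
    (hu : ∀ x, HasDerivAt u (u' x) x)
    (h₀ : Integrable fun x => u x * exp (-α * x ^ 2))
    (h₁ : Integrable fun x => x * u x * exp (-α * x ^ 2))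
    (h' : Integrable fun x => u' x * exp (-α * x ^ 2)) :
    ∫ x, x * u x * exp (-α * x ^ 2) = (2 * α)⁻¹ * ∫ x, u' x * exp (-α * x ^ 2) := by
  have hF : ∀ x, HasDerivAt (fun t => -(2 * α)⁻¹ * (u t * exp (-α * t ^ 2)))
      (x * u x * exp (-α * x ^ 2) - (2 * α)⁻¹ * (u' x * exp (-α * x ^ 2))) x := by
    intro x
    have he : HasDerivAt (fun t => exp (-α * t ^ 2)) (exp (-α * x ^ 2) * (-α * (2 * x))) x := by
      simpa using ((hasDerivAt_pow 2 x).const_mul (-α)).exp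
    refine (((hu x).mul he).const_mul _).congr_deriv ?_
    field_simp
    ring
  have h := integral_eq_zero_of_hasDerivAt_of_integrable hF (h₁.sub (h'.const_mul _))
    (h₀.const_mul _)
  rw [integral_sub h₁ (h'.const_mul _), integral_const_mul] at h
  linarith

lemma exists_eval_eq_pow_mul_H2v (a b f g y : ℝ) (m n : ℕ) :
    ∃ P : ℝ[X], ∀ x, P.eval x = (a * x + b) ^ m * H2v n (f * x + g) y := by
  obtain ⟨Q, hQ⟩ := exists_eval_eq_H2v n y
  exact ⟨(C a * X + C b) ^ m * Q.comp (C f * X + C g), fun x => by simp [hQ]⟩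

noncomputable def binomialHermiteIntegral (a b f g y α : ℝ) (m n : ℕ) : ℝ :=
  ∫ x : ℝ, (a * x + b) ^ m * H2v n (f * x + g) y * exp (-α * x ^ 2)

section binomialHermiteIntegral

variable (a b f g y : ℝ) {α : ℝ} (m n : ℕ)

local notation "J" => binomialHermiteIntegral a b f g y α

lemma integrable_pow_mul_H2v_mul_exp (hα : 0 < α) :
    Integrable fun x : ℝ => (a * x + b) ^ m * H2v n (f * x + g) y * exp (-α * x ^ 2) := by
  obtain ⟨P, hP⟩ := exists_eval_eq_pow_mul_H2v a b f g y m n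
  simpa only [hP] using integrable_eval_mul_exp_neg_mul_sq hα P

lemma integrable_id_mul_pow_mul_H2v_mul_exp (hα : 0 < α) :
    Integrable fun x : ℝ => x * ((a * x + b) ^ m * H2v n (f * x + g) y) * exp (-α * x ^ 2) := by
  obtain ⟨P, hP⟩ := exists_eval_eq_pow_mul_H2v a b f g y m n
  have h := integrable_eval_mul_exp_neg_mul_sq hα (X * P)
  simp only [Polynomial.eval_mul, Polynomial.eval_X, hP] at h
  exact h

lemma integral_id_mul_pow_mul_H2v_mul_exp (hα : 0 < α) :
    ∫ x, x * ((a * x + b) ^ m * H2v n (f * x + g) y) * exp (-α * x ^ 2) =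
      (2 * α)⁻¹ * (m * a * J (m - 1) n + n * f * J m (n - 1)) := by
  have hu : ∀ x, HasDerivAt (fun t => (a * t + b) ^ m * H2v n (f * t + g) y)
      (m * (a * x + b) ^ (m - 1) * a * H2v n (f * x + g) y +
        (a * x + b) ^ m * (n * H2v (n - 1) (f * x + g) y * f)) x := by
    intro x
    have hlin : ∀ c d : ℝ, HasDerivAt (fun t => c * t + d) c x := fun c d => by
      simpa using ((hasDerivAt_id' x).const_mul c).add_const d
    exact ((hlin a b).pow m).mul ((hasDerivAt_H2v n y _).comp x (hlin f g))
  have hI := fun k l => integrable_pow_mul_H2v_mul_exp a b f g y k l hα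
  have hsplit : (fun x => (m * (a * x + b) ^ (m - 1) * a * H2v n (f * x + g) y +
        (a * x + b) ^ m * (n * H2v (n - 1) (f * x + g) y * f)) * exp (-α * x ^ 2)) =
      fun x => m * a * ((a * x + b) ^ (m - 1) * H2v n (f * x + g) y * exp (-α * x ^ 2)) +
        n * f * ((a * x + b) ^ m * H2v (n - 1) (f * x + g) y * exp (-α * x ^ 2)) := by
    ext x; ring
  rw [integral_id_mul_mul_exp_neg_mul_sq hα.ne' hu (hI m n)
    (integrable_id_mul_pow_mul_H2v_mul_exp a b f g y m n hα) (by
      rw [hsplit]; exact ((hI _ _).const_mul _).add ((hI _ _).const_mul _)), hsplit,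
    integral_add ((hI _ _).const_mul _) ((hI _ _).const_mul _),
    integral_const_mul, integral_const_mul]
  rfl

lemma binomialHermiteIntegral_zero_zero : J 0 0 = sqrt (π / α) := by
  simpa [binomialHermiteIntegral, H2v_zero] using integral_gaussian α

lemma binomialHermiteIntegral_succ_left (hα : 0 < α) :
    J (m + 1) n = b * J m n + 2 * m * (a ^ 2 / (4 * α)) * J (m - 1) n +
      n * (a * f / (2 * α)) * J m (n - 1) := by
  have hsplit : (fun x => (a * x + b) ^ (m + 1) * H2v n (f * x + g) y * exp (-α * x ^ 2)) =
      fun x => a * (x * ((a * x + b) ^ m * H2v n (f * x + g) y) * exp (-α * x ^ 2)) +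
        b * ((a * x + b) ^ m * H2v n (f * x + g) y * exp (-α * x ^ 2)) := by
    ext x; ring
  calc J (m + 1) n
      = a * (∫ x, x * ((a * x + b) ^ m * H2v n (f * x + g) y) * exp (-α * x ^ 2)) +
          b * J m n := by
        rw [binomialHermiteIntegral, hsplit,
          integral_add ((integrable_id_mul_pow_mul_H2v_mul_exp a b f g y m n hα).const_mul _)
            ((integrable_pow_mul_H2v_mul_exp a b f g y m n hα).const_mul _),
          integral_const_mul, integral_const_mul]
        rfl
    _ = _ := by
        rw [integral_id_mul_pow_mul_H2v_mul_exp a b f g y m n hα]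
        field_simp
        ring

lemma binomialHermiteIntegral_succ_right (hα : 0 < α) :
    J m (n + 1) = g * J m n + 2 * n * (y + f ^ 2 / (4 * α)) * J m (n - 1) +
      m * (a * f / (2 * α)) * J (m - 1) n := by
  have hI := fun k l => integrable_pow_mul_H2v_mul_exp a b f g y k l hα
  have hsplit : (fun x => (a * x + b) ^ m * H2v (n + 1) (f * x + g) y * exp (-α * x ^ 2)) =
      fun x => f * (x * ((a * x + b) ^ m * H2v n (f * x + g) y) * exp (-α * x ^ 2)) +
        (g * ((a * x + b) ^ m * H2v n (f * x + g) y * exp (-α * x ^ 2)) +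
          2 * n * y * ((a * x + b) ^ m * H2v (n - 1) (f * x + g) y * exp (-α * x ^ 2))) := by
    ext x; rw [H2v_succ]; ring
  calc J m (n + 1)
      = f * (∫ x, x * ((a * x + b) ^ m * H2v n (f * x + g) y) * exp (-α * x ^ 2)) +
          (g * J m n + 2 * n * y * J m (n - 1)) := by
        rw [binomialHermiteIntegral, hsplit,
          integral_add ((integrable_id_mul_pow_mul_H2v_mul_exp a b f g y m n hα).const_mul _)
            (((hI _ _).const_mul _).fun_add ((hI _ _).const_mul _)),
          integral_add ((hI _ _).const_mul _) ((hI _ _).const_mul _),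
          integral_const_mul, integral_const_mul, integral_const_mul]
        rfl
    _ = _ := by
        rw [integral_id_mul_pow_mul_H2v_mul_exp a b f g y m n hα]
        field_simp
        ring

end binomialHermiteIntegral

theorem gaussian_integral_binomial_hermite (m n : ℕ) (a b f g y α : ℝ) (hα : 0 < α) :
    ∫ x : ℝ, (a * x + b) ^ m * H2v n (f * x + g) y * Real.exp (-α * x ^ 2) =
      Real.sqrt (π / α) *
        H2idx m n b (a ^ 2 / (4 * α)) g (y + f ^ 2 / (4 * α)) (a * f / (2 * α)) := by
  change binomialHermiteIntegral a b f g y α m n = _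
  induction h : m + n using Nat.strong_induction_on generalizing m n with
  | _ N ih =>
    rcases m with _ | m
    · rcases n with _ | n
      · simp [binomialHermiteIntegral_zero_zero, H2idx, H2v_zero]
      · rw [binomialHermiteIntegral_succ_right (hα := hα), H2idx_succ_right,
          ih _ (by omega) 0 n rfl, ih _ (by omega) 0 (n - 1) rfl]
        ring
    · rw [binomialHermiteIntegral_succ_left (hα := hα), H2idx_succ_left,
        ih _ (by omega) m n rfl, ih _ (by omega) (m - 1) n rfl, ih _ (by omega) m (n - 1) rfl]
      ring
end
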